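/- arXiv:1703.02674 — 2 statements merged into one kernel-verified Lean document; each statement's English description precedes it below -/
import Mathlib

section
/- Let A be a real n×m matrix such that for every S ⊆ {1,…,m} with |S| ≥ n the submatrix A_S has full row rank n, and let k be an integer with n ≤ k ≤ m. Then there exists a subset S ⊆ {1,…,m} with |S| = k such that both: (1) tr((A_S A_Sᵀ)^{-1}) ≤ ((m−n+1)/(k−n+1)) · tr((A Aᵀ)^{-1}), and (2) λ_min(A_S A_Sᵀ) ≥ ((k−n+1)/(n(m−n+1))) · λ_min(A Aᵀ), where λ_min denotes the smallest eigenvalue of a real symmetric positive definite matrix. (Equivalently, in terms of the Moore–Penrose pseudoinverse: ‖A_S^†‖_F² ≤ ((m−n+1)/(k−n+1))‖A^†‖_F² and ‖A_S^†‖_2² ≤ (n(m−n+1)/(k−n+1))‖A^†‖_2².) -/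
open Matrix BigOperators

/-- The n×n Gram matrix `A_S * A_Sᵀ` of the columns of `A` indexed by `S`;
for `S = univ` this is `A Aᵀ`. -/
def dvsGram {n m : ℕ} (A : Matrix (Fin n) (Fin m) ℝ) (S : Finset (Fin m)) :
    Matrix (Fin n) (Fin n) ℝ :=
  Matrix.of fun i j => ∑ t ∈ S, A i t * A j t

/-- The `n × |T|` submatrix of `A` formed by the columns indexed by `T`. -/
def dvsCols {n m : ℕ} (A : Matrix (Fin n) (Fin m) ℝ) (T : Finset (Fin m)) :
    Matrix (Fin n) {x // x ∈ T} ℝ :=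
  A.submatrix id (fun p => p.1)

theorem dvsGram_isHermitian {n m : ℕ} (A : Matrix (Fin n) (Fin m) ℝ) (S : Finset (Fin m)) :
    (dvsGram A S).IsHermitian := by
  unfold Matrix.IsHermitian
  ext i j
  simp only [dvsGram, Matrix.conjTranspose_apply, Matrix.of_apply, star_trivial]
  exact Finset.sum_congr rfl fun t _ => mul_comm _ _

/-- The smallest eigenvalue `λ_min(A_S A_Sᵀ)` of the Gram matrix. -/
noncomputable def dvsLamMin {n m : ℕ} (A : Matrix (Fin n) (Fin m) ℝ) (S : Finset (Fin m)) : ℝ :=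
  ⨅ i, (dvsGram_isHermitian A S).eigenvalues i

/-! Columns are deleted greedily, one at a time. For `M = ∑_{j ∈ S} aⱼ aⱼᵀ`, Sherman–Morrison gives
`tr((M - aⱼ aⱼᵀ)⁻¹) = tr M⁻¹ + qⱼ / (1 - tⱼ)` with `tⱼ = aⱼᵀ M⁻¹ aⱼ` and `qⱼ = aⱼᵀ M⁻² aⱼ`.
Since `∑ tⱼ = n` and `∑ qⱼ = tr M⁻¹`, averaging yields a column whose deletion multiplies
`tr M⁻¹` by at most `(s - n + 1) / (s - n)`, where `s = |S|`; from `s = m` down to `s = k` these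
factors telescope to `(m - n + 1) / (k - n + 1)`. The eigenvalue bound then follows from
`1 / λ_min(M) ≤ tr M⁻¹ ≤ n / λ_min(M)`. -/

open scoped ComplexOrder

namespace Matrix

variable {ι : Type*} [Fintype ι]

theorem trace_mul_sum_vecMulVec_self {R κ : Type*} [CommSemiring R] (N : Matrix ι ι R)
    (S : Finset κ) (a : κ → ι → R) :
    (N * ∑ j ∈ S, vecMulVec (a j) (a j)).trace = ∑ j ∈ S, a j ⬝ᵥ N *ᵥ a j := by
  simp only [Finset.mul_sum, trace_sum, mul_vecMulVec, trace_vecMulVec, dotProduct_comm]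

variable [DecidableEq ι]

theorem inv_sub_vecMulVec {K : Type*} [Field K] {M : Matrix ι ι K} (hM : IsUnit M) (u v : ι → K)
    (h : v ⬝ᵥ M⁻¹ *ᵥ u ≠ 1) :
    (M - vecMulVec u v)⁻¹
      = M⁻¹ + (1 - v ⬝ᵥ M⁻¹ *ᵥ u)⁻¹ • vecMulVec (M⁻¹ *ᵥ u) (v ᵥ* M⁻¹) := by
  have hMN : M * M⁻¹ = 1 := mul_nonsing_inv M ((isUnit_iff_isUnit_det M).mp hM)
  refine inv_eq_right_inv ?_
  rw [sub_mul, Matrix.mul_add, Matrix.mul_add, hMN, Matrix.mul_smul, mul_vecMulVec, mulVec_mulVec,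
    hMN, one_mulVec, Matrix.mul_smul, vecMulVec_mul_vecMulVec, vecMulVec_smul, vecMulVec_mul]
  have hc : (1 - v ⬝ᵥ M⁻¹ *ᵥ u)⁻¹ - 1 - (1 - v ⬝ᵥ M⁻¹ *ᵥ u)⁻¹ * (v ⬝ᵥ M⁻¹ *ᵥ u) = 0 := by
    field_simp
    ring
  linear_combination (norm := module) hc • vecMulVec u (v ᵥ* M⁻¹)

theorem trace_inv_sub_vecMulVec {K : Type*} [Field K] {M : Matrix ι ι K} (hM : IsUnit M)
    (u v : ι → K) (h : v ⬝ᵥ M⁻¹ *ᵥ u ≠ 1) :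
    (M - vecMulVec u v)⁻¹.trace
      = M⁻¹.trace + v ⬝ᵥ (M⁻¹ * M⁻¹) *ᵥ u / (1 - v ⬝ᵥ M⁻¹ *ᵥ u) := by
  rw [inv_sub_vecMulVec hM u v h, trace_add, trace_smul, trace_vecMulVec, smul_eq_mul,
    dotProduct_comm (M⁻¹ *ᵥ u), ← dotProduct_mulVec, mulVec_mulVec, inv_mul_eq_div]

theorem PosDef.dotProduct_inv_mulVec_lt_one {M : Matrix ι ι ℝ} {a : ι → ℝ}
    (h : (M - vecMulVec a a).PosDef) (hM : IsUnit M) : a ⬝ᵥ M⁻¹ *ᵥ a < 1 := by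
  set w := M⁻¹ *ᵥ a
  have hMw : M *ᵥ w = a := by
    rw [mulVec_mulVec, mul_nonsing_inv M ((isUnit_iff_isUnit_det M).mp hM), one_mulVec]
  by_cases hw : w = 0
  · rw [hw, dotProduct_zero]
    exact one_pos
  -- `wᵀ (M - a aᵀ) w = t - t²` with `t = aᵀ M⁻¹ a`
  have hpos := h.dotProduct_mulVec_pos hw
  rw [star_trivial, sub_mulVec, dotProduct_sub, hMw, vecMulVec_mulVec, dotProduct_smul,
    dotProduct_comm w a] at hpos
  simp only [MulOpposite.smul_eq_mul_unop, MulOpposite.unop_op] at hpos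
  nlinarith

theorem exists_trace_inv_sub_vecMulVec_mul_le {κ : Type*} {S : Finset κ} (a : κ → ι → ℝ)
    (hS : Fintype.card ι < S.card) {M : Matrix ι ι ℝ}
    (hMa : ∑ j ∈ S, vecMulVec (a j) (a j) = M) (hM : IsUnit M)
    (hM' : ∀ j ∈ S, (M - vecMulVec (a j) (a j)).PosDef) :
    ∃ j ∈ S, (M - vecMulVec (a j) (a j))⁻¹.trace * (S.card - Fintype.card ι)
      ≤ (S.card - Fintype.card ι + 1) * M⁻¹.trace := by
  have hNM : M⁻¹ * M = 1 := nonsing_inv_mul M ((isUnit_iff_isUnit_det M).mp hM)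
  set t := fun j => a j ⬝ᵥ M⁻¹ *ᵥ a j
  set q := fun j => a j ⬝ᵥ (M⁻¹ * M⁻¹) *ᵥ a j
  have ht : ∀ j ∈ S, t j < 1 := fun j hj => (hM' j hj).dotProduct_inv_mulVec_lt_one hM
  have hsum_t : ∑ j ∈ S, t j = Fintype.card ι := by
    rw [← trace_mul_sum_vecMulVec_self, hMa, hNM, trace_one]
  have hsum_q : ∑ j ∈ S, q j = M⁻¹.trace := by
    rw [← trace_mul_sum_vecMulVec_self, hMa, Matrix.mul_assoc, hNM, Matrix.mul_one]
  obtain ⟨j, hj, hle⟩ := Finset.exists_le_of_sum_le (s := S) (Finset.card_pos.mp (by omega))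
    (f := fun j => q j * (S.card - Fintype.card ι)) (g := fun j => M⁻¹.trace * (1 - t j))
    (by rw [← Finset.sum_mul, ← Finset.mul_sum, Finset.sum_sub_distrib, hsum_q, hsum_t]; simp)
  refine ⟨j, hj, ?_⟩
  have hcost : q j / (1 - t j) * (S.card - Fintype.card ι) ≤ M⁻¹.trace := by
    rw [div_mul_eq_mul_div, div_le_iff₀ (sub_pos.mpr (ht j hj))]
    exact hle
  rw [trace_inv_sub_vecMulVec hM _ _ (ht j hj).ne]
  linear_combination hcost

theorem PosSemidef.posDef_of_rank_eq_card {𝕜 : Type*} [RCLike 𝕜] {M : Matrix ι ι 𝕜}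
    (hM : M.PosSemidef) (hrank : M.rank = Fintype.card ι) : M.PosDef := by
  refine hM.1.posDef_iff_eigenvalues_pos.mpr fun i => (hM.eigenvalues_nonneg i).lt_of_ne' ?_
  intro hi
  have := Fintype.card_subtype_lt (p := fun j => hM.1.eigenvalues j ≠ 0) (not_not.mpr hi)
  rw [← hM.1.rank_eq_card_non_zero_eigs] at this
  omega

theorem PosDef.trace_inv_eq_sum_inv_eigenvalues {𝕜 : Type*} [RCLike 𝕜] {M : Matrix ι ι 𝕜}
    (hM : M.PosDef) : M⁻¹.trace = ∑ i, ((hM.1.eigenvalues i : 𝕜))⁻¹ := by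
  set U : Matrix ι ι 𝕜 := (hM.1.eigenvectorUnitary : Matrix ι ι 𝕜)
  have hUU : star U * U = 1 := UnitaryGroup.star_mul_self _
  have hspec : M = U * diagonal (RCLike.ofReal ∘ hM.1.eigenvalues) * star U := by
    simpa [Unitary.conjStarAlgAut_apply] using hM.1.spectral_theorem
  have hD : (diagonal (RCLike.ofReal ∘ hM.1.eigenvalues))⁻¹
      = diagonal fun i => ((hM.1.eigenvalues i : 𝕜))⁻¹ := by
    refine inv_eq_left_inv ?_
    rw [diagonal_mul_diagonal, ← diagonal_one]
    congr 1 with i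
    exact inv_mul_cancel₀ (RCLike.ofReal_ne_zero.mpr (hM.eigenvalues_pos i).ne')
  calc M⁻¹.trace = (diagonal (RCLike.ofReal ∘ hM.1.eigenvalues))⁻¹.trace := by
        conv_lhs => rw [hspec]
        rw [mul_inv_rev, mul_inv_rev, trace_mul_comm, Matrix.mul_assoc, ← mul_inv_rev, hUU,
          inv_one, Matrix.mul_one]
    _ = ∑ i, ((hM.1.eigenvalues i : 𝕜))⁻¹ := by rw [hD, trace_diagonal]

theorem PosDef.inv_iInf_eigenvalues_le_trace_inv {M : Matrix ι ι ℝ} (hM : M.PosDef) :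
    (⨅ i, hM.1.eigenvalues i)⁻¹ ≤ M⁻¹.trace := by
  rw [hM.trace_inv_eq_sum_inv_eigenvalues]
  cases isEmpty_or_nonempty ι
  · simp [Real.iInf_of_isEmpty]
  obtain ⟨i, hi⟩ := exists_eq_ciInf_of_finite (f := hM.1.eigenvalues)
  rw [← hi]
  exact Finset.single_le_sum (fun j _ => (inv_pos.mpr (hM.eigenvalues_pos j)).le)
    (Finset.mem_univ i)

theorem PosDef.iInf_eigenvalues_pos [Nonempty ι] {M : Matrix ι ι ℝ} (hM : M.PosDef) :
    0 < ⨅ i, hM.1.eigenvalues i := by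
  obtain ⟨j, hj⟩ := exists_eq_ciInf_of_finite (f := hM.1.eigenvalues)
  exact hj ▸ hM.eigenvalues_pos j

theorem PosDef.trace_inv_le_card_mul_inv_iInf_eigenvalues {M : Matrix ι ι ℝ} (hM : M.PosDef) :
    M⁻¹.trace ≤ Fintype.card ι * (⨅ i, hM.1.eigenvalues i)⁻¹ := by
  rw [hM.trace_inv_eq_sum_inv_eigenvalues, ← nsmul_eq_mul, ← Finset.card_univ,
    ← Finset.sum_const]
  refine Finset.sum_le_sum fun i _ => inv_anti₀ ?_ (ciInf_le (Finite.bddBelow_range _) i)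
  have : Nonempty ι := ⟨i⟩
  exact hM.iInf_eigenvalues_pos

theorem PosDef.div_iInf_eigenvalues_le_of_trace_inv_le {M M' : Matrix ι ι ℝ} (hM : M.PosDef)
    (hM' : M'.PosDef) {c : ℝ} (hc : 0 < c) (h : M⁻¹.trace ≤ c * M'⁻¹.trace) :
    (⨅ i, hM'.1.eigenvalues i) / (Fintype.card ι * c) ≤ ⨅ i, hM.1.eigenvalues i := by
  cases isEmpty_or_nonempty ι
  · simp [Real.iInf_of_isEmpty]
  have hpos := hM.iInf_eigenvalues_pos
  have hpos' := hM'.iInf_eigenvalues_pos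
  have hle : (⨅ i, hM.1.eigenvalues i)⁻¹ ≤ (Fintype.card ι * c) / ⨅ i, hM'.1.eigenvalues i :=
    calc (⨅ i, hM.1.eigenvalues i)⁻¹ ≤ M⁻¹.trace := hM.inv_iInf_eigenvalues_le_trace_inv
      _ ≤ c * M'⁻¹.trace := h
      _ ≤ c * (Fintype.card ι * (⨅ i, hM'.1.eigenvalues i)⁻¹) := by
        gcongr
        exact hM'.trace_inv_le_card_mul_inv_iInf_eigenvalues
      _ = (Fintype.card ι * c) / ⨅ i, hM'.1.eigenvalues i := by ring
  rwa [inv_le_comm₀ hpos (by positivity), inv_div] at hle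

end Matrix

section Gram

variable {n m : ℕ} (A : Matrix (Fin n) (Fin m) ℝ)

theorem dvsGram_eq_sum_vecMulVec (S : Finset (Fin m)) :
    dvsGram A S = ∑ j ∈ S, vecMulVec (Aᵀ j) (Aᵀ j) := by
  ext i i'
  simp [dvsGram, Matrix.sum_apply, vecMulVec_apply]

theorem dvsGram_erase {S : Finset (Fin m)} {j : Fin m} (hj : j ∈ S) :
    dvsGram A (S.erase j) = dvsGram A S - vecMulVec (Aᵀ j) (Aᵀ j) := by
  rw [dvsGram_eq_sum_vecMulVec, dvsGram_eq_sum_vecMulVec, Finset.sum_erase_eq_sub hj]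

theorem dvsGram_eq_dvsCols_mul_transpose (S : Finset (Fin m)) :
    dvsGram A S = dvsCols A S * (dvsCols A S)ᵀ := by
  ext i i'
  simp only [dvsGram, dvsCols, of_apply, mul_apply, transpose_apply, submatrix_apply, id_eq]
  exact (Finset.sum_coe_sort S fun t => A i t * A i' t).symm

theorem dvsGram_posDef {S : Finset (Fin m)} (hS : (dvsCols A S).rank = n) :
    (dvsGram A S).PosDef := by
  rw [dvsGram_eq_dvsCols_mul_transpose]
  refine (posSemidef_self_mul_conjTranspose (dvsCols A S)).posDef_of_rank_eq_card ?_
  rw [conjTranspose_eq_transpose_of_trivial, rank_self_mul_transpose, hS, Fintype.card_fin]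

theorem exists_subset_card_eq_trace_inv_dvsGram_mul_le
    (hrank : ∀ S : Finset (Fin m), n ≤ S.card → (dvsCols A S).rank = n) {k : ℕ} (hnk : n ≤ k)
    {S : Finset (Fin m)} (hkS : k ≤ S.card) :
    ∃ T ⊆ S, T.card = k ∧
      (dvsGram A T)⁻¹.trace * (k - n + 1) ≤ (S.card - n + 1) * (dvsGram A S)⁻¹.trace := by
  obtain ⟨s, hs⟩ : ∃ s, S.card = s := ⟨_, rfl⟩
  rw [hs] at hkS ⊢
  induction s, hkS using Nat.le_induction generalizing S with
  | base => exact ⟨S, subset_rfl, hs, by rw [mul_comm]⟩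
  | succ s hks ih =>
    have hposDef : ∀ j ∈ S, (dvsGram A S - vecMulVec (Aᵀ j) (Aᵀ j)).PosDef := fun j hj => by
      rw [← dvsGram_erase A hj]
      exact dvsGram_posDef A (hrank _ (by rw [Finset.card_erase_of_mem hj]; omega))
    obtain ⟨j, hj, hstep⟩ := exists_trace_inv_sub_vecMulVec_mul_le Aᵀ
      (by rw [Fintype.card_fin]; omega) (dvsGram_eq_sum_vecMulVec A S).symm
      (dvsGram_posDef A (hrank S (by omega))).isUnit hposDef
    obtain ⟨T, hTS, hT, htr⟩ := ih (S := S.erase j) (by rw [Finset.card_erase_of_mem hj]; omega)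
    refine ⟨T, hTS.trans (Finset.erase_subset j S), hT, ?_⟩
    rw [← dvsGram_erase A hj, Fintype.card_fin, hs] at hstep
    push_cast at hstep ⊢
    linear_combination htr + hstep

end Gram

/-- **Deterministic column subset selection (derandomized DVS).**  If every `n`-or-more
column submatrix of `A` has full row rank `n` and `n ≤ k ≤ m`, then there is a subset
`S` of `k` columns with
`tr((A_S A_Sᵀ)⁻¹) ≤ ((m-n+1)/(k-n+1)) tr((A Aᵀ)⁻¹)` and
`λ_min(A_S A_Sᵀ) ≥ ((k-n+1)/(n(m-n+1))) λ_min(A Aᵀ)`;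
equivalently `‖A_S^†‖_F² ≤ ((m-n+1)/(k-n+1)) ‖A^†‖_F²` and
`‖A_S^†‖_2² ≤ (n(m-n+1)/(k-n+1)) ‖A^†‖_2²`. -/
theorem dvs_derandomized_bounds {n m : ℕ} (A : Matrix (Fin n) (Fin m) ℝ)
    (hrank : ∀ S : Finset (Fin m), n ≤ S.card → (dvsCols A S).rank = n)
    (k : ℕ) (hnk : n ≤ k) (hkm : k ≤ m) :
    ∃ S : Finset (Fin m), S.card = k ∧
      ((dvsGram A S)⁻¹).trace
          ≤ (((m : ℝ) - n + 1) / ((k : ℝ) - n + 1)) * ((dvsGram A Finset.univ)⁻¹).trace ∧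
      dvsLamMin A S
          ≥ (((k : ℝ) - n + 1) / ((n : ℝ) * ((m : ℝ) - n + 1))) * dvsLamMin A Finset.univ := by
  obtain ⟨S, -, hSk, htr⟩ := exists_subset_card_eq_trace_inv_dvsGram_mul_le A hrank hnk
    (S := Finset.univ) (by simpa using hkm)
  have hnk' : (n : ℝ) ≤ k := by exact_mod_cast hnk
  have hkm' : (k : ℝ) ≤ m := by exact_mod_cast hkm
  have hc : 0 < ((m : ℝ) - n + 1) / ((k : ℝ) - n + 1) := div_pos (by linarith) (by linarith)
  have htrace : ((dvsGram A S)⁻¹).trace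
      ≤ (((m : ℝ) - n + 1) / ((k : ℝ) - n + 1)) * ((dvsGram A Finset.univ)⁻¹).trace := by
    rw [div_mul_eq_mul_div, le_div_iff₀ (by linarith)]
    simpa using htr
  refine ⟨S, hSk, htrace, ?_⟩
  have hlam := (dvsGram_posDef A (hrank S (hSk ▸ hnk))).div_iInf_eigenvalues_le_of_trace_inv_le
    (dvsGram_posDef A (hrank _ (by simpa using hnk.trans hkm))) hc htrace
  rw [Fintype.card_fin, mul_div_assoc', div_div_eq_mul_div] at hlam
  rw [ge_iff_le, div_mul_eq_mul_div, mul_comm]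
  exact hlam
end

section
/- Let A be a real n×m matrix with full row rank n, and let k be an integer with n ≤ k ≤ m. Then the complement polynomial p_c(z) = ∑_{S ⊆ {1,…,m}, |S| = k} det(A_S A_Sᵀ) ∏_{i ∉ S} z_i is real stable; in particular, for every z ∈ ℂ^m with Im(z_i) > 0 for all i = 1,…,m, p_c(z) ≠ 0. -/
open Matrix BigOperators

/-!
Write `γ_T = det (A_T A_Tᵀ)`. Cauchy–Binet gives `det (A diag(v) Aᵀ) = ∑_{|T| = n} γ_T ∏_{t ∈ T} v_t`,
hence `γ_S = ∑_{T ⊆ S, |T| = n} γ_T`, and `p_c(z)` is the coefficient of `t^(k-n)` in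
`g(t) = ∑_{|T| = n} γ_T ∏_{i ∉ T} (t + z_i) = ∏_i (t + z_i) · det (A diag((t + z)⁻¹) Aᵀ)`.
If `Im t ≥ 0`, the weights `v = (t + z)⁻¹` have negative imaginary part, so for `x ≠ 0` the form
`Im (x* A diag(v) Aᵀ x) = ∑ Im v_i |(Aᵀx)_i|²` is negative (`Aᵀ` is injective) and `g(t) ≠ 0`.
Thus the roots of `g` lie in the open lower half-plane, and by Gauss–Lucas so do those of every
derivative `g⁽ʲ⁾`; since `g⁽ʲ⁾(0) = j! g_j`, all coefficients of `g` up to its degree are nonzero.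
-/

namespace Matrix

open Finset

section CauchyBinet

variable {R ι κ : Type*} [CommRing R] [Fintype κ] [DecidableEq κ]

theorem det_submatrix_eq_zero_of_not_injective (A : Matrix κ ι R) {φ : κ → ι}
    (hφ : ¬ Function.Injective φ) : (A.submatrix id φ).det = 0 := by
  obtain ⟨i, j, hij, hne⟩ := Function.not_injective_iff.mp hφ
  exact det_zero_of_column_eq hne fun k => by simp [hij]

variable [Fintype ι] [DecidableEq ι]

theorem det_mul_diagonal_mul_transpose_eq_sum_fun (A : Matrix κ ι R) (v : ι → R) :
    (A * diagonal v * Aᵀ).det =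
      ∑ φ : κ → ι, (∏ i, v (φ i)) * ((∏ i, A i (φ i)) * (A.submatrix id φ).det) := by
  simp only [det_apply', mul_apply, diagonal, of_apply, transpose_apply, mul_ite, mul_zero,
    sum_ite_eq', mem_univ, if_true, prod_univ_sum, Fintype.piFinset_univ, mul_sum,
    submatrix_apply, id]
  rw [sum_comm]
  refine sum_congr rfl fun φ _ => sum_congr rfl fun σ _ => ?_
  simp only [prod_mul_distrib]
  ring

theorem exists_det_mul_diagonal_mul_transpose_eq_sum (A : Matrix κ ι R) :
    ∃ a : Finset ι → R, ∀ v : ι → R, (A * diagonal v * Aᵀ).det =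
      ∑ S ∈ univ.powersetCard (Fintype.card κ), a S * ∏ t ∈ S, v t := by
  classical
  refine ⟨fun S => ∑ φ ∈ univ with Function.Injective φ ∧ image φ univ = S,
    (∏ i, A i (φ i)) * (A.submatrix id φ).det, fun v => ?_⟩
  rw [det_mul_diagonal_mul_transpose_eq_sum_fun, ← sum_filter_of_ne (p := Function.Injective)
    fun φ _ h => by_contra fun hφ => h (by
      rw [det_submatrix_eq_zero_of_not_injective A hφ, mul_zero, mul_zero])]
  rw [← sum_fiberwise_of_maps_to (g := fun φ => image φ univ) (t := univ.powersetCard _)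
    fun φ hφ => mem_powersetCard_univ.mpr <| by
      rw [card_image_of_injective _ (mem_filter.mp hφ).2, card_univ]]
  refine sum_congr rfl fun S _ => ?_
  rw [sum_mul, filter_filter]
  refine sum_congr rfl fun φ hφ => ?_
  obtain ⟨hinj, rfl⟩ := (mem_filter.mp hφ).2
  rw [prod_image fun i _ j _ h => hinj h, mul_comm]

-- The coefficient of `∏_{t ∈ S} v t` in the expansion is its value at the indicator of `S`.
theorem det_mul_diagonal_mul_transpose (A : Matrix κ ι R) (v : ι → R) :
    (A * diagonal v * Aᵀ).det = ∑ S ∈ univ.powersetCard (Fintype.card κ),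
      (A * diagonal (fun t => if t ∈ S then (1 : R) else 0) * Aᵀ).det * ∏ t ∈ S, v t := by
  obtain ⟨a, ha⟩ := exists_det_mul_diagonal_mul_transpose_eq_sum A
  rw [ha]
  refine sum_congr rfl fun S hS => ?_
  rw [ha, sum_eq_single_of_mem S hS fun T hT hTS => ?_]
  · rw [prod_boole, if_pos fun _ h => h, mul_one]
  · rw [prod_boole, if_neg, mul_zero]
    exact fun hsub => hTS <| eq_of_subset_of_card_le hsub <| by
      rw [mem_powersetCard_univ.mp hS, mem_powersetCard_univ.mp hT]

theorem det_mul_diagonal_indicator_mul_transpose (A : Matrix κ ι R) (S : Finset ι) :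
    (A * diagonal (fun t => if t ∈ S then (1 : R) else 0) * Aᵀ).det =
      ∑ T ∈ univ.powersetCard (Fintype.card κ) with T ⊆ S,
        (A * diagonal (fun t => if t ∈ T then (1 : R) else 0) * Aᵀ).det := by
  rw [det_mul_diagonal_mul_transpose, sum_filter]
  refine sum_congr rfl fun T _ => ?_
  rw [prod_boole]
  simp only [← subset_iff, mul_ite, mul_one, mul_zero]

end CauchyBinet

variable {ι κ : Type*} [Fintype ι] [Fintype κ] [DecidableEq κ]

theorem det_mul_transpose_ne_zero_of_rank_eq {K : Type*} [Field K] [LinearOrder K]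
    [IsStrictOrderedRing K] (A : Matrix κ ι K) (hA : A.rank = Fintype.card κ) :
    (A * Aᵀ).det ≠ 0 := by
  have hrange : LinearMap.range (A * Aᵀ).mulVecLin = ⊤ := Submodule.eq_top_of_finrank_eq <| by
    rw [← rank, rank_self_mul_transpose, hA, Module.finrank_fintype_fun_eq_card]
  have hunit : IsUnit (A * Aᵀ) :=
    mulVec_surjective_iff_isUnit.mp (LinearMap.range_eq_top.mp hrange)
  exact ((isUnit_iff_isUnit_det _).mp hunit).ne_zero

theorem det_map_ofReal_mul_diagonal_mul_transpose_ne_zero [DecidableEq ι]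
    (A : Matrix κ ι ℝ) (hA : (A * Aᵀ).det ≠ 0) (v : ι → ℂ) (hv : ∀ i, (v i).im < 0) :
    (A.map Complex.ofReal * diagonal v * (A.map Complex.ofReal)ᵀ).det ≠ 0 := by
  set B := A.map Complex.ofReal
  intro hdet
  obtain ⟨x, hx0, hx⟩ := exists_mulVec_eq_zero_iff.mpr hdet
  set y := Bᵀ *ᵥ x
  have hBstar : star x ᵥ* B = star y := by
    rw [star_mulVec]
    congr 1
    ext i j
    simp [B]
  have hform : star x ⬝ᵥ ((B * diagonal v * Bᵀ) *ᵥ x) = ∑ t, v t * Complex.normSq (y t) := by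
    rw [← mulVec_mulVec, ← mulVec_mulVec, dotProduct_mulVec, hBstar]
    simp only [dotProduct, mulVec_diagonal, Pi.star_apply]
    refine sum_congr rfl fun t _ => ?_
    rw [Complex.normSq_eq_conj_mul_self, Complex.star_def]
    ring
  have hy : y = 0 := by
    have him := congrArg Complex.im hform
    rw [hx, dotProduct_zero, Complex.zero_im, Complex.im_sum] at him
    simp only [Complex.im_mul_ofReal] at him
    funext t
    have := (sum_eq_zero_iff_of_nonpos fun t _ => mul_nonpos_of_nonpos_of_nonneg (hv t).le
      (Complex.normSq_nonneg (y t))).mp him.symm t (mem_univ t)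
    simpa [(hv t).ne] using this
  have hdet' : (B * Bᵀ).det = 0 := exists_mulVec_eq_zero_iff.mp
    ⟨x, hx0, by rw [← mulVec_mulVec]; exact (congrArg _ hy).trans (mulVec_zero _)⟩
  have hBB : B * Bᵀ = Complex.ofRealHom.mapMatrix (A * Aᵀ) := by
    ext i j
    simp [B, mul_apply]
  rw [hBB, ← RingHom.map_det] at hdet'
  exact hA (Complex.ofReal_eq_zero.mp hdet')

end Matrix

namespace Polynomial

open Finset

variable {K : Set ℂ}

theorem rootSet_derivative_subset_of_convex (hK : Convex ℝ K) {p : ℂ[X]}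
    (hp : p.rootSet ℂ ⊆ K) : p.derivative.rootSet ℂ ⊆ K := by
  rcases Nat.eq_zero_or_pos p.natDegree with hdeg | hdeg
  · simp [derivative_of_natDegree_zero hdeg]
  · exact (rootSet_derivative_subset_convexHull_rootSet
      (natDegree_pos_iff_degree_pos.mp hdeg)).trans (convexHull_min hp hK)

theorem rootSet_iterate_derivative_subset_of_convex (hK : Convex ℝ K) {p : ℂ[X]}
    (hp : p.rootSet ℂ ⊆ K) (j : ℕ) : (derivative^[j] p).rootSet ℂ ⊆ K := by
  induction j with
  | zero => exact hp
  | succ j ih =>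
    rw [Function.iterate_succ_apply']
    exact rootSet_derivative_subset_of_convex hK ih

theorem coeff_ne_zero_of_rootSet_subset_convex (hK : Convex ℝ K) (h0 : (0 : ℂ) ∉ K)
    {p : ℂ[X]} (hp : p ≠ 0) (hroots : p.rootSet ℂ ⊆ K) {j : ℕ} (hj : j ≤ p.natDegree) :
    p.coeff j ≠ 0 := by
  have hder : derivative^[j] p ≠ 0 := by
    have hc : (derivative^[j] p).coeff (p.natDegree - j) ≠ 0 := by
      rw [coeff_iterate_derivative, Nat.sub_add_cancel hj]
      exact smul_ne_zero ((Nat.descFactorial_eq_zero_iff_lt).not.mpr (by omega))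
        (leadingCoeff_ne_zero.mpr hp)
    exact fun h => hc (by rw [h, coeff_zero])
  intro hcoeff
  refine h0 (rootSet_iterate_derivative_subset_of_convex hK hroots j ?_)
  rw [mem_rootSet, aeval_def, eval₂_at_zero, coeff_iterate_derivative, zero_add, hcoeff]
  simp [hder]

theorem coeff_sum_C_mul_prod_compl_X_add_C {R ι : Type*} [CommRing R] [Fintype ι]
    [DecidableEq ι] (c : Finset ι → R) (z : ι → R) {n k : ℕ} (hnk : n ≤ k)
    (hk : k ≤ Fintype.card ι) :
    (∑ T ∈ univ.powersetCard n, C (c T) * ∏ i ∈ Tᶜ, (X + C (z i))).coeff (k - n) =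
      ∑ S ∈ univ.powersetCard k, (∑ T ∈ univ.powersetCard n with T ⊆ S, c T) * ∏ i ∈ Sᶜ, z i := by
  simp_rw [finsetSum_coeff, coeff_C_mul, sum_mul]
  rw [sum_comm' (t' := univ.powersetCard n) (s' := fun T => {S ∈ univ.powersetCard k | T ⊆ S})
    fun S T => by simp only [mem_filter]; tauto]
  refine sum_congr rfl fun T hT => ?_
  have hTc : #Tᶜ = Fintype.card ι - n := by
    rw [card_compl, mem_powersetCard_univ.mp hT]
  rw [prod_X_add_C_coeff _ _ (by omega), ← mul_sum, hTc]
  congr 1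
  refine sum_nbij' compl compl (fun U hU => ?_) (fun S hS => ?_) (fun U _ => compl_compl U)
    (fun S _ => compl_compl S) fun U _ => by rw [compl_compl]
  · obtain ⟨hUT, hUcard⟩ := mem_powersetCard.mp hU
    refine mem_filter.mpr ⟨mem_powersetCard_univ.mpr ?_, subset_compl_comm.mp hUT⟩
    rw [card_compl, hUcard]
    omega
  · obtain ⟨hScard, hTS⟩ := mem_filter.mp hS
    refine mem_powersetCard.mpr ⟨compl_subset_compl.mpr hTS, ?_⟩
    rw [card_compl, mem_powersetCard_univ.mp hScard]
    omega

end Polynomial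

section dvsGram

open Finset

variable {n m : ℕ} (A : Matrix (Fin n) (Fin m) ℝ)

theorem dvsGram_eq_mul_diagonal_mul_transpose (S : Finset (Fin m)) :
    dvsGram A S = A * diagonal (fun t => if t ∈ S then (1 : ℝ) else 0) * Aᵀ := by
  ext i j
  simp [dvsGram, mul_apply, diagonal]

theorem dvsGram_univ : dvsGram A univ = A * Aᵀ := by
  ext i j
  simp [dvsGram, mul_apply]

theorem det_dvsGram_eq_sum (S : Finset (Fin m)) :
    (dvsGram A S).det = ∑ T ∈ univ.powersetCard n with T ⊆ S, (dvsGram A T).det := by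
  rw [dvsGram_eq_mul_diagonal_mul_transpose, det_mul_diagonal_indicator_mul_transpose,
    Fintype.card_fin]
  simp_rw [dvsGram_eq_mul_diagonal_mul_transpose]

theorem ofReal_det_dvsGram (S : Finset (Fin m)) :
    ((dvsGram A S).det : ℂ) = (A.map Complex.ofReal *
      diagonal (fun t => if t ∈ S then (1 : ℂ) else 0) * (A.map Complex.ofReal)ᵀ).det := by
  rw [← Complex.ofRealHom_eq_coe, RingHom.map_det, dvsGram_eq_mul_diagonal_mul_transpose]
  congr 1
  ext i j
  simp [mul_apply, diagonal]

theorem sum_det_dvsGram_mul_prod_compl_ne_zero (hA : (A * Aᵀ).det ≠ 0) (w : Fin m → ℂ)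
    (hw : ∀ i, 0 < (w i).im) :
    ∑ T ∈ univ.powersetCard n, ((dvsGram A T).det : ℂ) * ∏ i ∈ Tᶜ, w i ≠ 0 := by
  have hw0 : ∀ i, w i ≠ 0 := fun i h => (hw i).ne' (by rw [h, Complex.zero_im])
  have hw_inv : ∀ i, ((w i)⁻¹).im < 0 := fun i => by
    rw [Complex.inv_im]
    exact div_neg_of_neg_of_pos (neg_neg_of_pos (hw i)) (Complex.normSq_pos.mpr (hw0 i))
  have hsum : ∑ T ∈ univ.powersetCard n, ((dvsGram A T).det : ℂ) * ∏ i ∈ Tᶜ, w i =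
      (∏ i, w i) * (A.map Complex.ofReal * diagonal (fun i => (w i)⁻¹) *
        (A.map Complex.ofReal)ᵀ).det := by
    rw [det_mul_diagonal_mul_transpose, Fintype.card_fin, mul_sum]
    refine sum_congr rfl fun T _ => ?_
    have hT : ∏ i ∈ T, w i ≠ 0 := prod_ne_zero_iff.mpr fun i _ => hw0 i
    rw [← ofReal_det_dvsGram, prod_inv_distrib, ← prod_compl_mul_prod T w]
    field_simp
  rw [hsum]
  exact mul_ne_zero (prod_ne_zero_iff.mpr fun i _ => hw0 i)
    (det_map_ofReal_mul_diagonal_mul_transpose_ne_zero A hA _ hw_inv)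

end dvsGram

open Finset Polynomial in
/-- For a full-row-rank real `n × m` matrix `A` and `n ≤ k ≤ m`, the complement
polynomial `p_c(z) = ∑_{|S| = k} det(A_S A_Sᵀ) ∏_{i ∉ S} z_i` is real stable:
it does not vanish whenever all variables have positive imaginary part. -/
theorem dvs_complement_polynomial_real_stable {n m : ℕ} (A : Matrix (Fin n) (Fin m) ℝ)
    (hA : A.rank = n) (k : ℕ) (hnk : n ≤ k) (hkm : k ≤ m)
    (z : Fin m → ℂ) (hz : ∀ i, 0 < (z i).im) :
    ∑ S ∈ Finset.univ.powersetCard k, ((dvsGram A S).det : ℂ) * ∏ i ∈ Sᶜ, z i ≠ 0 := by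
  set g : ℂ[X] := ∑ T ∈ univ.powersetCard n, C ((dvsGram A T).det : ℂ) * ∏ i ∈ Tᶜ, (X + C (z i))
  have hAAt : (A * Aᵀ).det ≠ 0 := det_mul_transpose_ne_zero_of_rank_eq A (by simpa using hA)
  have hcoeff : ∀ {j}, n ≤ j → j ≤ m →
      g.coeff (j - n) = ∑ S ∈ univ.powersetCard j, ((dvsGram A S).det : ℂ) * ∏ i ∈ Sᶜ, z i :=
    fun hnj hjm => by
      rw [coeff_sum_C_mul_prod_compl_X_add_C _ z hnj (by simpa using hjm)]
      exact sum_congr rfl fun S _ => by rw [det_dvsGram_eq_sum A S, Complex.ofReal_sum]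
  have hlead : g.coeff (m - n) ≠ 0 := by
    have huniv : univ.powersetCard m = {(univ : Finset (Fin m))} := by
      simpa using powersetCard_self (univ : Finset (Fin m))
    rw [hcoeff (hnk.trans hkm) le_rfl, huniv, sum_singleton, compl_univ, prod_empty, mul_one,
      dvsGram_univ]
    exact_mod_cast hAAt
  have hroots : g.rootSet ℂ ⊆ {w | w.im < 0} := fun t ht => by
    show t.im < 0
    by_contra! ht_im
    refine sum_det_dvsGram_mul_prod_compl_ne_zero A hAAt (fun i => t + z i)
      (fun i => by simpa using add_pos_of_nonneg_of_pos ht_im (hz i)) ?_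
    rw [mem_rootSet, coe_aeval_eq_eval] at ht
    simpa [g, eval_finsetSum, eval_prod, add_comm] using ht.2
  rw [← hcoeff hnk hkm]
  exact coeff_ne_zero_of_rootSet_subset_convex (convex_halfSpace_im_lt 0) (by simp)
    (fun hg => hlead (by rw [hg, coeff_zero])) hroots
    ((Nat.sub_le_sub_right hkm n).trans (le_natDegree_of_ne_zero hlead))
end
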